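/- arXiv:1301.7714 — 2 statements merged into one kernel-verified Lean document; each statement's English description precedes it below -/
import Mathlib

section
/- For all integers n ≥ 2, 0 ≤ k ≤ n−2 and 0 ≤ r ≤ n−1, one has M(n,k,r,r+1) = M(n−1,k,r,r+1) + M(n−1,k,r−1,r+1) + N(n−1,k−1,r) + M(n−1,k,r−1,r), where N(n−1,−1,r) is interpreted as 0 when k = 0. -/
/-- The x-coordinate (number of East steps) of the lattice path `P` after `m` steps. -/
def latticePos {n : ℕ} (P : Fin n → Bool) (m : ℕ) : ℕ :=
  (Finset.univ.filter (fun i : Fin n => (i : ℕ) < m ∧ P i = true)).card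

/-- The number of intersections of paths `P` and `Q` (common lattice points with
coordinate sum strictly between `0` and `n`). -/
def latticeInter {n : ℕ} (P Q : Fin n → Bool) : ℕ :=
  ((Finset.Ioo 0 n).filter (fun m => latticePos P m = latticePos Q m)).card

/-- Number of ordered pairs of lattice paths of length `n`, ending at `(r, n-r)` and
`(s, n-s)` respectively, intersecting exactly `k` times (natural-number version). -/
def Mnat (n k r s : ℕ) : ℕ :=
  (Finset.univ.filter (fun PQ : (Fin n → Bool) × (Fin n → Bool) =>
      latticePos PQ.1 n = r ∧ latticePos PQ.2 n = s ∧ latticeInter PQ.1 PQ.2 = k)).card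

/-- `M n k r s`, extended by zero to integer arguments. -/
def M (n k r s : ℤ) : ℤ :=
  if 0 ≤ n ∧ 0 ≤ k ∧ 0 ≤ r ∧ 0 ≤ s then Mnat n.toNat k.toNat r.toNat s.toNat else 0

/-- `N n k r = M n k r r`. -/
def N (n k r : ℤ) : ℤ := M n k r r

/-- `NE n k p = Σ_{r+s=2p, 0 ≤ r,s ≤ n} M n k r s`. -/
noncomputable def NE (n k p : ℤ) : ℤ := ∑ r ∈ Finset.Icc (0 : ℤ) n, M n k r (2 * p - r)

/-- `NO n k p = Σ_{r+s=2p+1, 0 ≤ r,s ≤ n} M n k r s`. -/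
noncomputable def NO (n k p : ℤ) : ℤ := ∑ r ∈ Finset.Icc (0 : ℤ) n, M n k r (2 * p + 1 - r)

/-- Binomial coefficient for integer arguments (zero unless both are nonnegative). -/
def ichoose (a b : ℤ) : ℤ :=
  if 0 ≤ a ∧ 0 ≤ b then (a.toNat).choose b.toNat else 0

/-!
Split off the last step of both paths. If `P` and `Q` end at abscissae `r` and `s` and their last
steps are `b` and `c` (`true` meaning East), the truncated paths end at `r - b` and `s - c`, and
they have one intersection fewer exactly when they meet at time `n - 1`, i.e. when
`r - b = s - c`. For `s = r + 1` the four choices of `(b, c)` give the four terms, and only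
`(b, c) = (North, East)` makes the truncated paths meet. Since `M` vanishes at negative `k`, the
case `k = 0` needs no separate treatment.
-/

open Finset

section LastStep

variable {m : ℕ}

theorem latticePos_snoc (P : Fin m → Bool) (b : Bool) (j : ℕ) :
    latticePos (Fin.snoc P b : Fin (m + 1) → Bool) j =
      latticePos P j + if m < j ∧ b = true then 1 else 0 := by
  simp only [latticePos, card_filter, Fin.sum_univ_castSucc, Fin.snoc_castSucc, Fin.snoc_last,
    Fin.val_castSucc, Fin.val_last]

theorem latticePos_snoc_self (P : Fin m → Bool) (b : Bool) :
    latticePos (Fin.snoc P b : Fin (m + 1) → Bool) (m + 1) = latticePos P m + b.toNat := by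
  have hP : latticePos P (m + 1) = latticePos P m :=
    congrArg card <| filter_congr fun i _ => by simp [i.is_lt, i.is_lt.trans m.lt_succ_self]
  cases b <;> simp [latticePos_snoc, hP]

theorem latticeInter_snoc (hm : 1 ≤ m) (P Q : Fin m → Bool) (b c : Bool) :
    latticeInter (Fin.snoc P b : Fin (m + 1) → Bool) (Fin.snoc Q c) =
      latticeInter P Q + if latticePos P m = latticePos Q m then 1 else 0 := by
  have hIoo : Ioo 0 (m + 1) = insert m (Ioo 0 m) := by ext; simp; omega
  have hfilter : {j ∈ Ioo 0 m | latticePos (Fin.snoc P b : Fin (m + 1) → Bool) j =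
      latticePos (Fin.snoc Q c : Fin (m + 1) → Bool) j} =
      {j ∈ Ioo 0 m | latticePos P j = latticePos Q j} :=
    filter_congr fun j hj => by simp [latticePos_snoc, (mem_Ioo.1 hj).2.not_gt]
  rw [latticeInter, latticeInter, hIoo, filter_insert, hfilter]
  simp only [latticePos_snoc, lt_irrefl, false_and, if_false, add_zero]
  split_ifs
  · exact card_insert_of_notMem (by simp)
  · rfl

end LastStep

/-- `Mnat` with integer parameters, so that shifted indices such as `r - 1` need no truncated
subtraction. -/
def pathPairCount (m : ℕ) (k r s : ℤ) : ℕ :=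
  #{PQ : (Fin m → Bool) × (Fin m → Bool) | (latticePos PQ.1 m : ℤ) = r ∧
    (latticePos PQ.2 m : ℤ) = s ∧ (latticeInter PQ.1 PQ.2 : ℤ) = k}

theorem pathPairCount_succ {m : ℕ} (hm : 1 ≤ m) (k r s : ℤ) :
    pathPairCount (m + 1) k r s = ∑ b : Bool, ∑ c : Bool,
      pathPairCount m (k - if r - b.toNat = s - c.toNat then 1 else 0)
        (r - b.toNat) (s - c.toNat) := by
  let e : ((Fin m → Bool) × (Fin m → Bool)) × (Bool × Bool) ≃
      (Fin (m + 1) → Bool) × (Fin (m + 1) → Bool) :=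
    (Equiv.prodProdProdComm _ _ _ _).trans <|
      (Equiv.prodComm _ _).prodCongr (Equiv.prodComm _ _) |>.trans <|
        (Fin.snocEquiv fun _ => Bool).prodCongr (Fin.snocEquiv fun _ => Bool)
  rw [pathPairCount, card_filter, ← e.sum_comp, Fintype.sum_prod_type_right, Fintype.sum_prod_type]
  refine sum_congr rfl fun b _ => sum_congr rfl fun c _ => ?_
  rw [pathPairCount, card_filter]
  refine sum_congr rfl fun PQ _ => if_congr ?_ rfl rfl
  simp only [e, Equiv.trans_apply, Equiv.prodProdProdComm_apply, Equiv.prodCongr_apply,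
    Prod.map, Equiv.prodComm_apply, Prod.swap, Fin.snocEquiv, Equiv.coe_fn_mk, latticePos_snoc_self,
    latticeInter_snoc hm]
  split_ifs <;> omega

theorem M_eq_pathPairCount {n : ℤ} (hn : 0 ≤ n) (k r s : ℤ) :
    M n k r s = pathPairCount n.toNat k r s := by
  rw [M, pathPairCount, Mnat]
  split_ifs with h
  · congr 2
    exact filter_congr fun PQ _ => by omega
  · refine (Nat.cast_eq_zero.2 <| card_eq_zero.2 <| filter_eq_empty_iff.2 ?_).symm
    intro PQ _ hPQ
    omega

theorem M_succ {n : ℤ} (hn : 1 ≤ n) (k r s : ℤ) :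
    M (n + 1) k r s = ∑ b : Bool, ∑ c : Bool,
      M n (k - if r - b.toNat = s - c.toNat then 1 else 0) (r - b.toNat) (s - c.toNat) := by
  have hsucc : (n + 1).toNat = n.toNat + 1 := by omega
  simp only [M_eq_pathPairCount (by omega : 0 ≤ n + 1), M_eq_pathPairCount (by omega : 0 ≤ n),
    hsucc, pathPairCount_succ (by omega : 1 ≤ n.toNat)]
  push_cast
  rfl

theorem M_recurrence_adjacent_general (n k r : ℤ) (hn : 2 ≤ n) :
    M n k r (r + 1) =
      M (n - 1) k r (r + 1) + M (n - 1) k (r - 1) (r + 1) + N (n - 1) (k - 1) r +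
        M (n - 1) k (r - 1) r := by
  obtain ⟨m, hm, rfl⟩ : ∃ m, 1 ≤ m ∧ n = m + 1 := ⟨n - 1, by omega, by ring⟩
  have hne₁ : r - 1 ≠ r := by omega
  have hne₂ : r - 1 ≠ r + 1 := by omega
  have hne₃ : r ≠ r + 1 := by omega
  rw [M_succ hm, N]
  simp only [Fintype.sum_bool, Bool.toNat_true, Bool.toNat_false, Nat.cast_one, Nat.cast_zero,
    sub_zero, add_sub_cancel_right, if_pos, if_neg hne₁, if_neg hne₂, if_neg hne₃]
  ring

/-- The recurrence for `M(n,k,r,r+1)` (adjacent endpoints); here `N(n−1,−1,r) = 0`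
when `k = 0`. -/
theorem M_recurrence_adjacent (n k r : ℤ) (hn : 2 ≤ n) (hk : 0 ≤ k) (hkn : k ≤ n - 2)
    (hr : 0 ≤ r) (hrn : r ≤ n - 1) :
    M n k r (r + 1) =
      M (n - 1) k r (r + 1) + M (n - 1) k (r - 1) (r + 1) + N (n - 1) (k - 1) r +
        M (n - 1) k (r - 1) r :=
  M_recurrence_adjacent_general n k r hn
end

section
/- For all integers j ≥ 1, n ≥ j and 0 ≤ r ≤ n−j, one has M(n,0,r,r+j) = Σ ∏_{i=1}^{j} M(n_i, 0, r_i, r_i+1), where the sum is over all j-tuples (n_1,…,n_j) of positive integers with n_1+⋯+n_j = n and all j-tuples (r_1,…,r_j) of nonnegative integers with r_1+⋯+r_j = r. -/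
/-!
Two nonintersecting paths with different endpoints keep the same strict order at every positive
time, since their horizontal gap changes by at most one per step. Cut a pair with final gap
`j + 1 ≥ 2` at the last time `m` at which the gap is at most one (so exactly one, as `m > 0`):
the first `m` steps form a nonintersecting pair with final gap one, and the remaining steps, read
from the lattice point of each path at time `m`, form a nonintersecting pair with final gap `j`.
This bijection gives `M(n,0,r,r+j+1) = Σ M(m,0,r₁,r₁+1) · M(n-m,0,r₂,r₂+j)`, and the
decomposition follows by induction on `j`.
-/

open Finset

section Positions

variable {n : ℕ} (P : Fin n → Bool)

lemma latticePos_zero : latticePos P 0 = 0 := by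
  simp [latticePos]

lemma latticePos_monotone : Monotone (latticePos P) := fun _ _ h =>
  card_le_card fun i hi => by
    simp only [mem_filter] at hi ⊢
    exact ⟨hi.1, hi.2.1.trans_le h, hi.2.2⟩

lemma latticePos_succ_le (t : ℕ) : latticePos P (t + 1) ≤ latticePos P t + 1 := by
  unfold latticePos
  refine (card_le_card_sdiff_add_card
    (t := univ.filter fun i : Fin n => (i : ℕ) < t ∧ P i = true)).trans ?_
  rw [add_comm]
  gcongr
  refine card_le_one.2 fun a ha b hb => ?_
  simp only [mem_sdiff, mem_filter, mem_univ, true_and, not_and] at ha hb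
  exact Fin.ext (by grind)

lemma latticePos_le_self (t : ℕ) : latticePos P t ≤ t := by
  induction t with
  | zero => simp [latticePos_zero]
  | succ t ih => exact (latticePos_succ_le P t).trans (by omega)

lemma latticePos_of_le {t : ℕ} (h : n ≤ t) : latticePos P t = latticePos P n := by
  unfold latticePos
  congr 1
  refine filter_congr fun i _ => ?_
  simp [i.isLt, i.isLt.trans_le h]

end Positions

section Append

variable {a b : ℕ} (u : Fin a → Bool) (v : Fin b → Bool)

lemma latticePos_append (t : ℕ) :
    latticePos (Fin.append u v) t = latticePos u t + latticePos v (t - a) := by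
  unfold latticePos
  rw [card_filter, card_filter, card_filter, Fin.sum_univ_add]
  congr 1
  · refine sum_congr rfl fun i _ => ?_
    simp
  · refine sum_congr rfl fun i _ => ?_
    have h : a + (i : ℕ) < t ↔ (i : ℕ) < t - a := by omega
    simp [h]

lemma latticePos_append_of_le {t : ℕ} (h : t ≤ a) :
    latticePos (Fin.append u v) t = latticePos u t := by
  rw [latticePos_append, Nat.sub_eq_zero_of_le h, latticePos_zero, add_zero]

lemma latticePos_append_add (s : ℕ) :
    latticePos (Fin.append u v) (a + s) = latticePos u a + latticePos v s := by
  rw [latticePos_append, latticePos_of_le u (Nat.le_add_right a s), Nat.add_sub_cancel_left]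

end Append

section Nonintersecting

variable {n : ℕ} {P Q : Fin n → Bool}

lemma latticeInter_eq_zero_iff :
    latticeInter P Q = 0 ↔ ∀ t, 0 < t → t < n → latticePos P t ≠ latticePos Q t := by
  simp [latticeInter, filter_eq_empty_iff, and_imp]

lemma latticePos_lt_of_latticeInter_eq_zero (hPQ : latticeInter P Q = 0)
    (hn : latticePos P n < latticePos Q n) {t : ℕ} (ht : 0 < t) (htn : t ≤ n) :
    latticePos P t < latticePos Q t := by
  refine Nat.decreasingInduction (motive := fun t _ => 0 < t → latticePos P t < latticePos Q t)
    (fun k hk ih ht => ?_) (fun _ => hn) htn ht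
  have hP := latticePos_monotone P (Nat.le_add_right k 1)
  have hQ := latticePos_succ_le Q k
  have hne := latticeInter_eq_zero_iff.1 hPQ k ht hk
  have := ih (Nat.succ_pos k)
  omega

end Nonintersecting

def strictlyLeftPairs (n r s : ℕ) : Finset ((Fin n → Bool) × (Fin n → Bool)) :=
  univ.filter fun PQ : (Fin n → Bool) × (Fin n → Bool) =>
    latticePos PQ.1 n = r ∧ latticePos PQ.2 n = s ∧
      ∀ t ≤ n, 0 < t → latticePos PQ.1 t < latticePos PQ.2 t

lemma mem_strictlyLeftPairs {n r s : ℕ} {PQ : (Fin n → Bool) × (Fin n → Bool)} :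
    PQ ∈ strictlyLeftPairs n r s ↔ latticePos PQ.1 n = r ∧ latticePos PQ.2 n = s ∧
      ∀ t ≤ n, 0 < t → latticePos PQ.1 t < latticePos PQ.2 t := by
  simp [strictlyLeftPairs]

lemma card_strictlyLeftPairs {n r s : ℕ} (h : r < s) :
    #(strictlyLeftPairs n r s) = Mnat n 0 r s := by
  refine congrArg card (ext fun PQ => ?_)
  rw [mem_strictlyLeftPairs, mem_filter, and_iff_right (mem_univ _)]
  refine and_congr_right fun hr => and_congr_right fun hs => ?_
  exact ⟨fun hlt => latticeInter_eq_zero_iff.2 fun t ht htn => (hlt t htn.le ht).ne,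
    fun h0 t htn ht => latticePos_lt_of_latticeInter_eq_zero h0 (hr ▸ hs ▸ h) ht htn⟩

lemma Mnat_eq_zero_of_lt {n k r s : ℕ} (h : n < s) : Mnat n k r s = 0 := by
  refine card_eq_zero.2 (filter_eq_empty_iff.2 fun PQ _ hPQ => ?_)
  have := latticePos_le_self PQ.2 n
  omega

def lastWithinOne {n : ℕ} (P Q : Fin n → Bool) : ℕ :=
  Nat.findGreatest (fun t => latticePos Q t ≤ latticePos P t + 1) n

section LastWithinOne

variable {n : ℕ} {P Q : Fin n → Bool}

lemma lastWithinOne_eq_iff {m : ℕ} :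
    lastWithinOne P Q = m ↔ m ≤ n ∧ latticePos Q m ≤ latticePos P m + 1 ∧
      ∀ t, m < t → t ≤ n → latticePos P t + 1 < latticePos Q t := by
  rw [lastWithinOne, Nat.findGreatest_eq_iff]
  refine and_congr_right fun _ => and_congr ?_ (by simp only [not_le])
  rcases eq_or_ne m 0 with rfl | hm
  · simp [latticePos_zero]
  · simp [hm]

lemma lastWithinOne_le : lastWithinOne P Q ≤ n := Nat.findGreatest_le n

lemma one_le_lastWithinOne (hn : 1 ≤ n) : 1 ≤ lastWithinOne P Q :=
  Nat.le_findGreatest hn ((latticePos_le_self Q 1).trans (Nat.le_add_left 1 _))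

lemma lastWithinOne_eq_and_iff {r s m r₁ : ℕ} (hPQ : (P, Q) ∈ strictlyLeftPairs n r s)
    (hm : 0 < m) (hmn : m ≤ n) :
    lastWithinOne P Q = m ∧ latticePos P m = r₁ ↔ latticePos P m = r₁ ∧
      latticePos Q m = r₁ + 1 ∧ ∀ t, m < t → t ≤ n → latticePos P t + 1 < latticePos Q t := by
  have hlt : latticePos P m < latticePos Q m := (mem_strictlyLeftPairs.1 hPQ).2.2 m hmn hm
  rw [lastWithinOne_eq_iff]
  constructor
  · rintro ⟨⟨-, hQm, hgap⟩, rfl⟩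
    exact ⟨rfl, by omega, hgap⟩
  · rintro ⟨rfl, hQm, hgap⟩
    exact ⟨⟨hmn, by omega, hgap⟩, rfl⟩

end LastWithinOne

lemma append_mem_strictlyLeftPairs_iff {m b r₁ r₂ j : ℕ} (u₁ u₂ : Fin m → Bool)
    (v₁ v₂ : Fin b → Bool) :
    ((Fin.append u₁ v₁, Fin.append u₂ v₂) ∈
        strictlyLeftPairs (m + b) (r₁ + r₂) (r₁ + r₂ + (j + 1)) ∧
      latticePos (Fin.append u₁ v₁) m = r₁ ∧ latticePos (Fin.append u₂ v₂) m = r₁ + 1 ∧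
      ∀ t, m < t → t ≤ m + b →
        latticePos (Fin.append u₁ v₁) t + 1 < latticePos (Fin.append u₂ v₂) t) ↔
    (u₁, u₂) ∈ strictlyLeftPairs m r₁ (r₁ + 1) ∧ (v₁, v₂) ∈ strictlyLeftPairs b r₂ (r₂ + j) := by
  have hP := fun t => latticePos_append_of_le u₁ v₁ (t := t)
  have hQ := fun t => latticePos_append_of_le u₂ v₂ (t := t)
  have hP' := latticePos_append_add u₁ v₁
  have hQ' := latticePos_append_add u₂ v₂
  simp only [mem_strictlyLeftPairs]
  rw [hP m le_rfl, hQ m le_rfl]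
  constructor
  · rintro ⟨⟨hPn, hQn, hlt⟩, hu₁, hu₂, hgap⟩
    refine ⟨⟨hu₁, hu₂, fun t htm ht => ?_⟩, by grind, by grind, fun s hsb hs => ?_⟩
    · rw [← hP t htm, ← hQ t htm]
      exact hlt t (by omega) ht
    · have := hgap (m + s) (by omega) (by omega)
      rw [hP', hQ'] at this
      omega
  · rintro ⟨⟨hu₁, hu₂, hu⟩, hv₁, hv₂, hv⟩
    have hgap : ∀ t, m < t → t ≤ m + b →
        latticePos (Fin.append u₁ v₁) t + 1 < latticePos (Fin.append u₂ v₂) t := by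
      intro t hmt htb
      obtain ⟨s, rfl⟩ := Nat.exists_eq_add_of_le hmt.le
      rw [hP', hQ']
      have := hv s (by omega) (by omega)
      omega
    refine ⟨⟨by rw [hP']; omega, by rw [hQ']; omega, fun t htb ht => ?_⟩, hu₁, hu₂, hgap⟩
    rcases le_or_gt t m with htm | hmt
    · rw [hP t htm, hQ t htm]
      exact hu t htm ht
    · exact (Nat.lt_succ_self _).trans (hgap t hmt htb)

lemma card_filter_lastWithinOne {m b r₁ r₂ j : ℕ} (hm : 0 < m) :
    #((strictlyLeftPairs (m + b) (r₁ + r₂) (r₁ + r₂ + (j + 1))).filter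
        fun PQ => lastWithinOne PQ.1 PQ.2 = m ∧ latticePos PQ.1 m = r₁) =
      #(strictlyLeftPairs m r₁ (r₁ + 1)) * #(strictlyLeftPairs b r₂ (r₂ + j)) := by
  rw [← card_product]
  refine (card_equiv ((Equiv.prodProdProdComm _ _ _ _).trans
    ((Fin.appendEquiv m b).prodCongr (Fin.appendEquiv m b))) fun X => ?_).symm
  simp only [Equiv.trans_apply, Equiv.prodProdProdComm_apply, Equiv.prodCongr_apply, Prod.map]
  rw [mem_product, ← append_mem_strictlyLeftPairs_iff, mem_filter]
  exact and_congr_right fun hX => (lastWithinOne_eq_and_iff hX hm (Nat.le_add_right m b)).symm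

theorem Mnat_zero_add_add_one {j : ℕ} (hj : 0 < j) (n r : ℕ) :
    Mnat n 0 r (r + (j + 1)) =
      ∑ p ∈ (antidiagonal n).filter (0 < ·.1), ∑ q ∈ antidiagonal r,
        Mnat p.1 0 q.1 (q.1 + 1) * Mnat p.2 0 q.2 (q.2 + j) := by
  rw [← card_strictlyLeftPairs (by omega)]
  rw [card_eq_sum_card_fiberwise (t := (antidiagonal n).filter (0 < ·.1) ×ˢ antidiagonal r)
    (f := fun PQ => ((lastWithinOne PQ.1 PQ.2, n - lastWithinOne PQ.1 PQ.2),
      (latticePos PQ.1 (lastWithinOne PQ.1 PQ.2), r - latticePos PQ.1 (lastWithinOne PQ.1 PQ.2))))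
    ?mapsTo, sum_product]
  case mapsTo =>
    intro PQ hPQ
    obtain ⟨hP, hQ, -⟩ := mem_strictlyLeftPairs.1 hPQ
    have hn := latticePos_le_self PQ.2 n
    have hle : lastWithinOne PQ.1 PQ.2 ≤ n := lastWithinOne_le
    have := one_le_lastWithinOne (P := PQ.1) (Q := PQ.2) (by omega)
    have := latticePos_monotone PQ.1 hle
    simp only [mem_coe, mem_product, mem_filter, HasAntidiagonal.mem_antidiagonal]
    omega
  refine sum_congr rfl fun ⟨m, b⟩ hp => sum_congr rfl fun ⟨r₁, r₂⟩ hq => ?_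
  obtain ⟨rfl, hm⟩ : m + b = n ∧ 0 < m := by simpa using hp
  obtain rfl : r₁ + r₂ = r := by simpa using hq
  rw [← card_strictlyLeftPairs (by omega), ← card_strictlyLeftPairs (by omega),
    ← card_filter_lastWithinOne hm]
  congr 1
  refine filter_congr fun PQ _ => ?_
  simp only [Prod.mk.injEq]
  constructor
  · rintro ⟨⟨hm, -⟩, hr₁, -⟩
    exact ⟨hm, by rwa [hm] at hr₁⟩
  · rintro ⟨hm, hr₁⟩
    simp [hm, hr₁]

lemma sum_antidiagonalTuple_succ {β : Type*} [AddCommMonoid β] (k n : ℕ)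
    (f : (Fin (k + 1) → ℕ) → β) :
    ∑ d ∈ Nat.antidiagonalTuple (k + 1) n, f d =
      ∑ p ∈ antidiagonal n, ∑ d ∈ Nat.antidiagonalTuple k p.2, f (Fin.cons p.1 d) := by
  rw [sum_sigma']
  refine sum_nbij' (fun d : Fin (k + 1) → ℕ =>
      (⟨(d 0, ∑ i : Fin k, d i.succ), Fin.tail d⟩ : (_ : ℕ × ℕ) × (Fin k → ℕ)))
    (fun x => Fin.cons x.1.1 x.2) ?_ ?_ ?_ ?_ ?_
  · intro d hd
    simp_all [Nat.mem_antidiagonalTuple, Fin.sum_univ_succ, Fin.tail]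
  · intro x hx
    simp_all [Nat.mem_antidiagonalTuple, Fin.sum_cons]
  · intro d _
    simp
  · rintro ⟨⟨a, b⟩, d⟩ hx
    simp_all [Nat.mem_antidiagonalTuple]
  · intro d _
    simp

lemma sum_filter_pos_antidiagonalTuple_succ {β : Type*} [AddCommMonoid β] (k n : ℕ)
    (f : (Fin (k + 1) → ℕ) → β) :
    ∑ c ∈ (Nat.antidiagonalTuple (k + 1) n).filter (fun c => ∀ i, 0 < c i), f c =
      ∑ p ∈ (antidiagonal n).filter (0 < ·.1),
        ∑ c ∈ (Nat.antidiagonalTuple k p.2).filter (fun c => ∀ i, 0 < c i),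
          f (Fin.cons p.1 c) := by
  simp only [sum_filter, sum_antidiagonalTuple_succ, Fin.forall_fin_succ, Fin.cons_zero,
    Fin.cons_succ, ite_and]
  refine sum_congr rfl fun p _ => ?_
  split_ifs <;> simp

theorem Mnat_zero_add_eq_sum {j : ℕ} (hj : 0 < j) (n r : ℕ) :
    Mnat n 0 r (r + j) =
      ∑ c ∈ (Nat.antidiagonalTuple j n).filter (fun c => ∀ i, 0 < c i),
        ∑ d ∈ Nat.antidiagonalTuple j r, ∏ i : Fin j, Mnat (c i) 0 (d i) (d i + 1) := by
  induction j, hj using Nat.le_induction generalizing n r with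
  | base =>
    rw [Nat.antidiagonalTuple_one, Nat.antidiagonalTuple_one, filter_singleton]
    split_ifs with hn
    · simp
    · obtain rfl : n = 0 := by simpa using hn
      simp [Mnat_eq_zero_of_lt]
  | succ j hj ih =>
    rw [Mnat_zero_add_add_one hj, sum_filter_pos_antidiagonalTuple_succ]
    refine sum_congr rfl fun p _ => ?_
    simp only [ih, mul_sum, sum_antidiagonalTuple_succ, Fin.prod_univ_succ, Fin.cons_zero,
      Fin.cons_succ]
    exact sum_comm

lemma M_natCast (n r s : ℕ) : M n 0 r s = Mnat n 0 r s := by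
  simp [M]

theorem M_decomposition_nonintersecting_general (j n r : ℕ) (hj : 1 ≤ j) :
    M n 0 r (r + j) =
      ∑ c ∈ (Finset.Nat.antidiagonalTuple j n).filter (fun c => ∀ i, 0 < c i),
        ∑ d ∈ Finset.Nat.antidiagonalTuple j r,
          ∏ i : Fin j, M (c i) 0 (d i) (d i + 1) := by
  simp only [← Nat.cast_add, ← Nat.cast_add_one, M_natCast, Mnat_zero_add_eq_sum hj]
  push_cast
  rfl

/-- Decomposition of pairs of nonintersecting paths:
`M(n,0,r,r+j) = Σ ∏_{i=1}^{j} M(nᵢ,0,rᵢ,rᵢ+1)` over compositions `n₁+⋯+n_j = n`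
into positive parts and `r₁+⋯+r_j = r` into nonnegative parts. -/
theorem M_decomposition_nonintersecting (j n r : ℕ) (hj : 1 ≤ j) (hn : j ≤ n)
    (hr : r ≤ n - j) :
    M n 0 r (r + j) =
      ∑ c ∈ (Finset.Nat.antidiagonalTuple j n).filter (fun c => ∀ i, 0 < c i),
        ∑ d ∈ Finset.Nat.antidiagonalTuple j r,
          ∏ i : Fin j, M (c i) 0 (d i) (d i + 1) :=
  M_decomposition_nonintersecting_general j n r hj
end
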